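/- arXiv:1506.05064 — 2 statements merged into one kernel-verified Lean document; each statement's English description precedes it below -/
import Mathlib

section
/- In the graph C_X obtained by subdividing each edge of a connected graph X (X not a cycle) into a path of length four, every automorphism of C_X preserves the partition of the vertex set into the original vertices P, the middle vertices R, and the intermediate vertices Q. -/
/-
Vertices of `Q` and `R` have exactly two neighbours in `C_X`, while `p ∈ P` has as many as in
`X`. A finite connected graph all of whose vertices have two neighbours is a cycle, so some
`p ∈ P` has a number of neighbours other than two, and every automorphism `σ` sends it into `P`.
Following a subdivided edge `p_a q r q' p_b` shows that `σ p_a ∈ P` forces `σ p_b ∈ P`, so by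
connectivity `σ` maps `P` into `P`, hence the neighbours `Q` of `P` into `Q`, and `R` into `R`
(an `R`-vertex sent to `P` would come back to `P` under `σ⁻¹`). Applied to `σ⁻¹` as well, this
gives `σ '' B = B` for each block.
-/

/-- The vertex set of the graph `C_X`: the original vertices `P`, the
intermediate vertices `Q`, and the middle vertices `R`. -/
def CXVert {V : Type} (X : SimpleGraph V) : Type :=
  V ⊕ ({p : V × X.edgeSet // p.1 ∈ (p.2 : Sym2 V)} ⊕ X.edgeSet)

/-- The graph `C_X` obtained from `X` by replacing every edge `p_i p_j` by a
path `p_i q_{ik} r_k q_{jk} p_j` of length four. -/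
def CX {V : Type} (X : SimpleGraph V) : SimpleGraph (CXVert X) :=
  SimpleGraph.fromRel (fun a b =>
    match a, b with
    | Sum.inl v, Sum.inr (Sum.inl q) => v = q.1.1
    | Sum.inr (Sum.inl q), Sum.inr (Sum.inr r) => q.1.2 = r
    | _, _ => False)

/-- The block `P` of original vertices in `C_X`. -/
def Pblock {V : Type} (X : SimpleGraph V) : Set (CXVert X) := Set.range Sum.inl

/-- The block `Q` of intermediate vertices in `C_X`. -/
def Qblock {V : Type} (X : SimpleGraph V) : Set (CXVert X) :=
  Set.range (Sum.inr ∘ Sum.inl)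

/-- The block `R` of middle vertices in `C_X`. -/
def Rblock {V : Type} (X : SimpleGraph V) : Set (CXVert X) :=
  Set.range (Sum.inr ∘ Sum.inr)

namespace SimpleGraph

variable {α β : Type*} {A : SimpleGraph α} {B : SimpleGraph β}

theorem Iso.ncard_neighborSet (σ : A ≃g B) (a : α) :
    (B.neighborSet (σ a)).ncard = (A.neighborSet a).ncard := by
  rw [← σ.toEmbedding.preimage_neighborSet a]
  exact (Set.ncard_preimage_of_injective_subset_range σ.injective
    (by simp [σ.surjective.range_eq])).symm

theorem ncard_neighborSet_cycleGraph {n : ℕ} (v : Fin (n + 3)) :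
    ((cycleGraph (n + 3)).neighborSet v).ncard = 2 := by
  rw [Set.ncard_eq_toFinset_card', ← neighborFinset_def, card_neighborFinset_eq_degree,
    cycleGraph_degree_three_le]

theorem Copy.image_neighborSet_eq (f : Copy A B) (a : α) (hfin : (B.neighborSet (f a)).Finite)
    (h : (B.neighborSet (f a)).ncard ≤ (A.neighborSet a).ncard) :
    f '' A.neighborSet a = B.neighborSet (f a) :=
  Set.eq_of_subset_of_ncard_le (f.toHom.image_neighborSet_subset a)
    (by rwa [Set.ncard_image_of_injective (f := f) _ f.injective]) hfin

theorem Copy.surjective_of_image_neighborSet_eq (f : Copy A B) [Nonempty α] (hB : B.Preconnected)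
    (h : ∀ a, f '' A.neighborSet a = B.neighborSet (f a)) : Function.Surjective f := by
  obtain ⟨a₀⟩ := ‹Nonempty α›
  suffices ∀ {b b'} (_ : B.Walk b b'), b ∈ Set.range f → b' ∈ Set.range f from
    fun b ↦ this (hB (f a₀) b).some ⟨a₀, rfl⟩
  intro b b' w
  induction w with
  | nil => exact _root_.id
  | cons hadj _ ih =>
    rintro ⟨a, rfl⟩
    obtain ⟨a', -, rfl⟩ := (h a).symm.subset hadj
    exact ih ⟨a', rfl⟩

noncomputable def Copy.isoOfImageNeighborSetEq (f : Copy A B) (hf : Function.Surjective f)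
    (h : ∀ a, f '' A.neighborSet a = B.neighborSet (f a)) : A ≃g B where
  toEquiv := Equiv.ofBijective f ⟨f.injective, hf⟩
  map_rel_iff' {a a'} := by
    refine ⟨fun hadj ↦ ?_, f.toHom.map_adj⟩
    obtain ⟨a'', ha'', heq⟩ := (h a).symm.subset hadj
    exact f.injective heq ▸ ha''

theorem Connected.exists_iso_cycleGraph_of_ncard_neighborSet_eq_two {V : Type*} [Finite V]
    {G : SimpleGraph V} (hG : G.Connected) (h : ∀ v, (G.neighborSet v).ncard = 2) :
    ∃ n, Nonempty (G ≃g cycleGraph n) := by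
  obtain ⟨v⟩ := hG.nonempty
  obtain ⟨p, hp, -⟩ :=
    IsCycles.exists_cycle_toSubgraph_verts_eq_connectedComponentSupp (c := G.connectedComponentMk v)
      (fun w _ ↦ h w) rfl (Set.nonempty_of_ncard_ne_zero (by simp [h]))
  obtain ⟨k, hk⟩ : ∃ k, p.length = k + 3 :=
    ⟨p.length - 3, by have := hp.three_le_length; omega⟩
  obtain ⟨f⟩ := (cycleGraph_isContained_iff (by omega)).mpr ⟨v, p, hp, hk⟩
  have himage (a : Fin (k + 3)) : f '' (cycleGraph (k + 3)).neighborSet a = G.neighborSet (f a) :=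
    f.image_neighborSet_eq a (Set.toFinite _) (by rw [h, ncard_neighborSet_cycleGraph])
  exact ⟨k + 3, ⟨(f.isoOfImageNeighborSetEq
    (f.surjective_of_image_neighborSet_eq hG.preconnected himage) himage).symm⟩⟩

end SimpleGraph

namespace CX

open SimpleGraph Sum Set

variable {V : Type} {X : SimpleGraph V}

/-- The vertex `q_{ik}` of `C_X` is the incident pair `(p_i, r_k)` of `X`. -/
abbrev Flag (X : SimpleGraph V) := {p : V × X.edgeSet // p.1 ∈ (p.2 : Sym2 V)}

theorem adj_inl_iff {v : V} {y : CXVert X} :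
    (CX X).Adj (inl v) y ↔ ∃ q : Flag X, y = inr (inl q) ∧ q.1.1 = v := by
  refine ⟨fun ⟨_, h⟩ ↦ ?_, fun ⟨q, hy, hq⟩ ↦ hy ▸ ⟨inl_ne_inr, .inl hq.symm⟩⟩
  rcases y with w | q | e <;> simp only [or_false] at h
  exact ⟨q, rfl, h.symm⟩

theorem adj_flag_iff {q : Flag X} {y : CXVert X} :
    (CX X).Adj (inr (inl q)) y ↔ y = inl q.1.1 ∨ y = inr (inr q.1.2) := by
  refine ⟨fun ⟨_, h⟩ ↦ ?_, ?_⟩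
  · rcases y with w | q' | e <;> simp only [or_false, false_or] at h
    exacts [.inl (h ▸ rfl), .inr (h ▸ rfl)]
  · rintro (rfl | rfl)
    exacts [⟨inr_ne_inl, .inr rfl⟩, ⟨fun h ↦ inl_ne_inr (inr_injective h), .inl rfl⟩]

theorem adj_edge_iff {e : X.edgeSet} {y : CXVert X} :
    (CX X).Adj (inr (inr e)) y ↔ ∃ q : Flag X, y = inr (inl q) ∧ q.1.2 = e := by
  refine ⟨fun ⟨_, h⟩ ↦ ?_,
    fun ⟨q, hy, hq⟩ ↦ hy ▸ ⟨fun h ↦ inr_ne_inl (inr_injective h), .inr hq⟩⟩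
  rcases y with w | q | e' <;> simp only [or_false, false_or] at h
  exact ⟨q, rfl, h⟩

theorem ncard_neighborSet_flag (q : Flag X) : ((CX X).neighborSet (inr (inl q))).ncard = 2 := by
  have : (CX X).neighborSet (inr (inl q)) = {inl q.1.1, inr (inr q.1.2)} :=
    Set.ext fun _ ↦ adj_flag_iff
  rw [this]
  exact ncard_pair inl_ne_inr

theorem ncard_neighborSet_edge (e : X.edgeSet) : ((CX X).neighborSet (inr (inr e))).ncard = 2 := by
  obtain ⟨e, he⟩ := e
  induction e using Sym2.ind with | _ a b =>
  have : (CX X).neighborSet (inr (inr ⟨s(a, b), he⟩)) =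
      {inr (inl ⟨(a, ⟨s(a, b), he⟩), Sym2.mem_mk_left a b⟩),
        inr (inl ⟨(b, ⟨s(a, b), he⟩), Sym2.mem_mk_right a b⟩)} := by
    refine Set.ext fun y ↦ adj_edge_iff.trans ⟨?_, ?_⟩
    · rintro ⟨⟨⟨c, e⟩, hc⟩, rfl, rfl : e = _⟩
      rcases Sym2.mem_iff.mp (show c ∈ s(a, b) from hc) with rfl | rfl
      exacts [.inl rfl, .inr rfl]
    · rintro (rfl | rfl) <;> exact ⟨_, rfl, rfl⟩
  rw [this]
  refine ncard_pair fun h ↦ X.ne_of_adj he ?_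
  exact congrArg (fun q : Flag X ↦ q.1.1) (inl_injective (inr_injective h))

theorem ncard_neighborSet_inl (v : V) :
    ((CX X).neighborSet (inl v)).ncard = (X.neighborSet v).ncard := by
  classical
  let f : X.incidenceSet v → CXVert X := fun e ↦ inr (inl ⟨(v, ⟨e, e.2.1⟩), e.2.2⟩)
  have hf : Function.Injective f := fun e e' h ↦
    Subtype.ext (congrArg (fun q : Flag X ↦ (q.1.2 : Sym2 V)) (inl_injective (inr_injective h)))
  have : (CX X).neighborSet (inl v) = range f := by
    refine Set.ext fun y ↦ adj_inl_iff.trans ⟨?_, ?_⟩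
    · rintro ⟨⟨⟨w, e⟩, hw⟩, rfl, rfl : w = v⟩
      exact ⟨⟨e, e.2, hw⟩, rfl⟩
    · rintro ⟨e, rfl⟩
      exact ⟨_, rfl, rfl⟩
  rw [this, ncard_range_of_injective hf, Nat.card_congr (X.incidenceSetEquivNeighborSet v),
    Nat.card_coe_set_eq]

section Automorphism

variable (σ : CX X ≃g CX X)

theorem apply_inl_mem_Pblock {v : V} (hv : (X.neighborSet v).ncard ≠ 2) :
    σ (inl v) ∈ Pblock X := by
  have hcard := (σ.ncard_neighborSet (inl v)).trans (ncard_neighborSet_inl v)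
  rcases h : σ (inl v) with w | q | e
  · exact ⟨w, rfl⟩
  · rw [h, ncard_neighborSet_flag] at hcard
    exact absurd hcard.symm hv
  · rw [h, ncard_neighborSet_edge] at hcard
    exact absurd hcard.symm hv

/-- Walk along the subdivided edge `p_a q_a r q_b p_b`: at each step `σ` cannot go back,
and a `Q`-vertex has exactly one `P`- and one `R`-neighbour. -/
theorem apply_inl_mem_Pblock_of_adj {a b : V} (hab : X.Adj a b) (ha : σ (inl a) ∈ Pblock X) :
    σ (inl b) ∈ Pblock X := by
  let e : X.edgeSet := ⟨s(a, b), hab⟩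
  let qa : Flag X := ⟨(a, e), Sym2.mem_mk_left a b⟩
  let qb : Flag X := ⟨(b, e), Sym2.mem_mk_right a b⟩
  obtain ⟨a', ha'⟩ := ha
  have h₁ : (CX X).Adj (σ (inl a)) (σ (inr (inl qa))) :=
    σ.map_adj_iff.mpr (adj_inl_iff.mpr ⟨qa, rfl, rfl⟩)
  rw [← ha'] at h₁
  obtain ⟨qa', hqa', hqa'a⟩ := adj_inl_iff.mp h₁
  have h₂ : (CX X).Adj (σ (inr (inl qa))) (σ (inr (inr e))) :=
    σ.map_adj_iff.mpr (adj_flag_iff.mpr (.inr rfl))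
  rw [hqa', adj_flag_iff] at h₂
  obtain ⟨e', he'⟩ : ∃ e', σ (inr (inr e)) = inr (inr e') := by
    refine h₂.elim (fun h ↦ ?_) fun h ↦ ⟨_, h⟩
    have : σ (inr (inr e)) = σ (inl a) := by rw [h, hqa'a, ha']
    exact absurd (σ.injective this) inr_ne_inl
  have h₃ : (CX X).Adj (σ (inr (inr e))) (σ (inr (inl qb))) :=
    σ.map_adj_iff.mpr (adj_edge_iff.mpr ⟨qb, rfl, rfl⟩)
  rw [he'] at h₃
  obtain ⟨qb', hqb', hqb'e⟩ := adj_edge_iff.mp h₃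
  have h₄ : (CX X).Adj (σ (inr (inl qb))) (σ (inl b)) :=
    σ.map_adj_iff.mpr (adj_flag_iff.mpr (.inl rfl))
  rw [hqb', adj_flag_iff] at h₄
  refine h₄.elim (fun h ↦ ⟨_, h.symm⟩) fun h ↦ ?_
  have : σ (inl b) = σ (inr (inr e)) := by rw [h, he', hqb'e]
  exact absurd (σ.injective this) inl_ne_inr

end Automorphism

section Blocks

variable (hconn : X.Connected) (hv : ∃ v, (X.neighborSet v).ncard ≠ 2) (σ : CX X ≃g CX X)
include hconn hv

theorem mapsTo_Pblock : MapsTo σ (Pblock X) (Pblock X) := by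
  obtain ⟨v, hv⟩ := hv
  suffices ∀ {a b : V} (_ : X.Walk a b), σ (inl a) ∈ Pblock X → σ (inl b) ∈ Pblock X by
    rintro _ ⟨b, rfl⟩
    exact this (hconn.preconnected v b).some (apply_inl_mem_Pblock σ hv)
  intro a b w
  induction w with
  | nil => exact _root_.id
  | cons hadj _ ih => exact fun ha ↦ ih (apply_inl_mem_Pblock_of_adj σ hadj ha)

theorem mapsTo_Qblock : MapsTo σ (Qblock X) (Qblock X) := by
  rintro _ ⟨q, rfl⟩
  have hadj : (CX X).Adj (σ (inl q.1.1)) (σ (inr (inl q))) :=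
    σ.map_adj_iff.mpr (adj_inl_iff.mpr ⟨q, rfl, rfl⟩)
  obtain ⟨a, ha⟩ := mapsTo_Pblock hconn hv σ ⟨q.1.1, rfl⟩
  rw [← ha] at hadj
  obtain ⟨q', hq', -⟩ := adj_inl_iff.mp hadj
  exact ⟨q', hq'.symm⟩

theorem mapsTo_Rblock : MapsTo σ (Rblock X) (Rblock X) := by
  rintro _ ⟨e, rfl⟩
  let q : Flag X := ⟨((e : Sym2 V).out.1, e), Sym2.out_fst_mem _⟩
  have hadj : (CX X).Adj (σ (inr (inl q))) (σ (inr (inr e))) :=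
    σ.map_adj_iff.mpr (adj_flag_iff.mpr (.inr rfl))
  obtain ⟨q', hq'⟩ : ∃ q', σ (inr (inl q)) = inr (inl q') :=
    let ⟨q', hq'⟩ := mapsTo_Qblock hconn hv σ ⟨q, rfl⟩; ⟨q', hq'.symm⟩
  rw [hq', adj_flag_iff] at hadj
  refine hadj.elim (fun h ↦ ?_) fun h ↦ ⟨_, h.symm⟩
  obtain ⟨a, ha⟩ := mapsTo_Pblock hconn hv σ.symm ⟨q'.1.1, rfl⟩
  rw [← h] at ha
  exact absurd (ha.trans (σ.symm_apply_apply _)) inl_ne_inr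

end Blocks

end CX

/-- Every automorphism of `C_X` (for `X` connected, not a cycle) preserves the
partition of the vertices into the blocks `P`, `Q`, `R`: the image of each
block is again a block. -/
theorem aut_CX_preserves_partition {V : Type} [Fintype V] (X : SimpleGraph V)
    (hconn : X.Connected)
    (hnotcycle : ∀ n : ℕ, IsEmpty (X ≃g SimpleGraph.cycleGraph n))
    (σ : CX X ≃g CX X) :
    ∀ B ∈ ({Pblock X, Qblock X, Rblock X} : Set (Set (CXVert X))),
      (⇑σ) '' B ∈ ({Pblock X, Qblock X, Rblock X} : Set (Set (CXVert X))) := by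
  have hv : ∃ v, (X.neighborSet v).ncard ≠ 2 := by
    by_contra! h
    obtain ⟨n, ⟨e⟩⟩ := hconn.exists_iso_cycleGraph_of_ncard_neighborSet_eq_two h
    exact (hnotcycle n).false e
  have hmaps (τ : CX X ≃g CX X) :
      ∀ B ∈ ({Pblock X, Qblock X, Rblock X} : Set (Set (CXVert X))), Set.MapsTo τ B B := by
    rintro B (rfl | rfl | rfl)
    exacts [CX.mapsTo_Pblock hconn hv τ, CX.mapsTo_Qblock hconn hv τ,
      CX.mapsTo_Rblock hconn hv τ]
  intro B hB
  rwa [show σ '' B = B from (σ.toEquiv.bijOn' (hmaps σ B hB) (hmaps σ.symm B hB)).image_eq]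
end

section
/- If X is a connected graph that is not a cycle, then in the graph C_X (each edge of X subdivided into a path of length four), all vertices of Q and R have degree two, and the set P equals the set of vertices at distance divisible by four from any fixed vertex p of P of degree not equal to two. -/
namespace SimpleGraph

variable {α : Type*} {G : SimpleGraph α}

theorem le_add_length_of_adj_le {f : α → ℕ}
    (hf : ∀ v w, G.Adj v w → f w ≤ f v + 1) {u v : α} (W : G.Walk u v) :
    f v ≤ f u + W.length := by
  induction W with
  | nil => simp
  | cons h _ ih => have := hf _ _ h; simp only [Walk.length_cons]; omega

theorem exists_walk_length_eq_of_exists_adj_eq {u : α} {f : α → ℕ}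
    (hf_zero : ∀ v, f v = 0 → v = u)
    (hf_desc : ∀ v, f v ≠ 0 → ∃ w, G.Adj v w ∧ f w + 1 = f v)
    (v : α) : ∃ W : G.Walk v u, W.length = f v := by
  induction hn : f v generalizing v with
  | zero => exact ⟨.copy .nil rfl (hf_zero v hn), by simp⟩
  | succ n ih =>
    obtain ⟨w, hvw, hw⟩ := hf_desc v (by omega)
    obtain ⟨W, hW⟩ := ih w (by omega)
    exact ⟨.cons hvw W, by simp [hW]⟩

theorem dist_eq_of_adj_le_of_exists_adj_eq {u : α} (f : α → ℕ)
    (hf_zero : ∀ v, f v = 0 ↔ v = u)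
    (hf_adj : ∀ v w, G.Adj v w → f w ≤ f v + 1)
    (hf_desc : ∀ v, f v ≠ 0 → ∃ w, G.Adj v w ∧ f w + 1 = f v) (v : α) :
    G.dist u v = f v := by
  obtain ⟨W, hW⟩ := exists_walk_length_eq_of_exists_adj_eq (fun v => (hf_zero v).1) hf_desc v
  obtain ⟨W', hW'⟩ := Reachable.exists_walk_length_eq_dist ⟨W.reverse⟩
  have hu : f u = 0 := (hf_zero u).2 rfl
  have hle : f v ≤ f u + W'.length := le_add_length_of_adj_le hf_adj W'
  have hge : G.dist u v ≤ W.reverse.length := dist_le W.reverse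
  rw [Walk.length_reverse] at hge
  omega

theorem exists_adj_dist_add_one_eq {u v : α} (h : G.dist u v ≠ 0) :
    ∃ w, G.Adj v w ∧ G.dist u w + 1 = G.dist u v := by
  obtain ⟨W, hW⟩ := (Reachable.of_dist_ne_zero h).symm.exists_walk_length_eq_dist
  cases W with
  | nil => simp at hW h
  | cons hvw W =>
    refine ⟨_, hvw, ?_⟩
    have := dist_le W.reverse
    rcases hvw.diff_dist_adj (u := u) with h' | h' | h' <;>
      simp only [Walk.length_cons, Walk.length_reverse, dist_comm (u := v)] at * <;> omega

variable (G) in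
noncomputable def infDist (p : α) (e : Sym2 α) : ℕ := (e.map (G.dist p)).inf

@[simp] theorem infDist_mk (p a b : α) : G.infDist p s(a, b) = min (G.dist p a) (G.dist p b) :=
  rfl

theorem infDist_le_dist {p a : α} {e : Sym2 α} (ha : a ∈ e) : G.infDist p e ≤ G.dist p a := by
  induction e with | _ x y
  rcases Sym2.mem_iff.1 ha with rfl | rfl <;> simp

theorem dist_le_infDist_add_one {p a : α} {e : Sym2 α} (he : e ∈ G.edgeSet) (ha : a ∈ e) :
    G.dist p a ≤ G.infDist p e + 1 := by
  induction e with | _ x y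
  have hxy : G.Adj x y := he
  rcases hxy.diff_dist_adj (u := p) with h | h | h <;> rcases Sym2.mem_iff.1 ha with rfl | rfl <;>
    simp only [infDist_mk] <;> omega

theorem exists_mem_dist_eq_infDist (p : α) (e : Sym2 α) :
    ∃ a ∈ e, G.dist p a = G.infDist p e := by
  induction e with | _ x y
  rcases le_total (G.dist p x) (G.dist p y) with h | h
  · exact ⟨x, Sym2.mem_mk_left x y, by simp [h]⟩
  · exact ⟨y, Sym2.mem_mk_right x y, by simp [h]⟩

end SimpleGraph

namespace CX

open SimpleGraph

variable {V : Type} {X : SimpleGraph V}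

abbrev Incidence (X : SimpleGraph V) : Type := {p : V × X.edgeSet // p.1 ∈ (p.2 : Sym2 V)}

-- Typed constructors: a bare `Sum.inl v` elaborates at the unfolded sum type, on which `simp` and
-- `rw` fail to match terms of type `CXVert X`.
def ofVert (v : V) : CXVert X := .inl v

def ofInc (i : Incidence X) : CXVert X := .inr (.inl i)

def ofEdge (e : X.edgeSet) : CXVert X := .inr (.inr e)

@[elab_as_elim]
theorem _root_.CXVert.cases {motive : CXVert X → Prop} (vert : ∀ v, motive (ofVert v))
    (inc : ∀ i, motive (ofInc i)) (edge : ∀ e, motive (ofEdge e)) (x : CXVert X) :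
    motive x := by
  rcases x with v | i | e
  exacts [vert v, inc i, edge e]

section Adj

variable {v w : V} {i j : Incidence X} {e f : X.edgeSet}

@[simp] theorem not_adj_ofVert_ofVert : ¬ (CX X).Adj (ofVert v) (ofVert w) := by
  simp [CX, CXVert, ofVert]
@[simp] theorem not_adj_ofVert_ofEdge : ¬ (CX X).Adj (ofVert v) (ofEdge e) := by
  simp [CX, CXVert, ofVert, ofEdge]
@[simp] theorem not_adj_ofEdge_ofVert : ¬ (CX X).Adj (ofEdge e) (ofVert v) := by
  simp [CX, CXVert, ofVert, ofEdge]
@[simp] theorem not_adj_ofInc_ofInc : ¬ (CX X).Adj (ofInc i) (ofInc j) := by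
  simp [CX, CXVert, ofInc]
@[simp] theorem not_adj_ofEdge_ofEdge : ¬ (CX X).Adj (ofEdge e) (ofEdge f) := by
  simp [CX, CXVert, ofEdge]
@[simp] theorem adj_ofVert_ofInc : (CX X).Adj (ofVert v) (ofInc i) ↔ v = i.1.1 := by
  simp [CX, CXVert, ofVert, ofInc]
@[simp] theorem adj_ofInc_ofVert : (CX X).Adj (ofInc i) (ofVert v) ↔ v = i.1.1 := by
  simp [CX, CXVert, ofVert, ofInc]
@[simp] theorem adj_ofInc_ofEdge : (CX X).Adj (ofInc i) (ofEdge e) ↔ i.1.2 = e := by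
  simp [CX, CXVert, ofInc, ofEdge]
@[simp] theorem adj_ofEdge_ofInc : (CX X).Adj (ofEdge e) (ofInc i) ↔ i.1.2 = e := by
  simp [CX, CXVert, ofInc, ofEdge]

end Adj

@[simp] theorem ofVert_inj {v w : V} : (ofVert v : CXVert X) = ofVert w ↔ v = w :=
  Sum.inl_injective.eq_iff
@[simp] theorem ofInc_inj {i j : Incidence X} : ofInc i = ofInc j ↔ i = j :=
  (Sum.inr_injective.comp Sum.inl_injective).eq_iff
@[simp] theorem ofEdge_inj {e f : X.edgeSet} : ofEdge e = ofEdge f ↔ e = f :=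
  (Sum.inr_injective.comp Sum.inr_injective).eq_iff
@[simp] theorem ofVert_ne_ofInc {v : V} {i : Incidence X} : ofVert v ≠ ofInc i := Sum.inl_ne_inr
@[simp] theorem ofInc_ne_ofVert {v : V} {i : Incidence X} : ofInc i ≠ ofVert v := Sum.inr_ne_inl
@[simp] theorem ofVert_ne_ofEdge {v : V} {e : X.edgeSet} : ofVert v ≠ ofEdge e := Sum.inl_ne_inr
@[simp] theorem ofEdge_ne_ofVert {v : V} {e : X.edgeSet} : ofEdge e ≠ ofVert v := Sum.inr_ne_inl
@[simp] theorem ofEdge_ne_ofInc {i : Incidence X} {e : X.edgeSet} : ofEdge e ≠ ofInc i :=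
  fun h => Sum.inr_ne_inl (Sum.inr_injective h)

theorem neighborSet_ofInc (i : Incidence X) :
    (CX X).neighborSet (ofInc i) = {ofVert i.1.1, ofEdge i.1.2} := by
  ext x
  induction x using CXVert.cases <;> simp [eq_comm]

theorem neighborSet_ofEdge {a b : V} (h : X.Adj a b) :
    (CX X).neighborSet (ofEdge ⟨s(a, b), h⟩) =
      {ofInc ⟨(a, ⟨s(a, b), h⟩), Sym2.mem_mk_left a b⟩,
        ofInc ⟨(b, ⟨s(a, b), h⟩), Sym2.mem_mk_right a b⟩} := by
  ext x
  induction x using CXVert.cases with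
  | vert => simp
  | edge => simp
  | inc i =>
    obtain ⟨⟨c, e⟩, hc⟩ := i
    simp only [mem_neighborSet, adj_ofEdge_ofInc, Set.mem_insert_iff, Set.mem_singleton_iff,
      ofInc_inj, Subtype.mk.injEq, Prod.mk.injEq]
    constructor
    · rintro rfl
      simpa using hc
    · rintro (⟨-, rfl⟩ | ⟨-, rfl⟩) <;> rfl

theorem ncard_neighborSet_ofInc (i : Incidence X) :
    ((CX X).neighborSet (ofInc i)).ncard = 2 := by
  rw [neighborSet_ofInc, Set.ncard_pair ofVert_ne_ofEdge]

theorem ncard_neighborSet_ofEdge (e : X.edgeSet) :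
    ((CX X).neighborSet (ofEdge e)).ncard = 2 := by
  obtain ⟨e, he⟩ := e
  induction e with | _ a b
  rw [neighborSet_ofEdge he, Set.ncard_pair]
  simpa using he.ne

-- At `ofInc i` the two candidate routes from `p` arrive through the vertex `i.1.1` or through
-- the middle vertex of the edge `i.1.2`.
noncomputable def potential (p : V) : CXVert X → ℕ
  | .inl v => 4 * X.dist p v
  | .inr (.inl i) => min (4 * X.dist p i.1.1 + 1) (4 * X.infDist p i.1.2 + 3)
  | .inr (.inr e) => 4 * X.infDist p e + 2

section potential

variable (p : V)

@[simp] theorem potential_ofVert (v : V) : potential p (ofVert v : CXVert X) = 4 * X.dist p v :=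
  rfl

@[simp] theorem potential_ofInc (i : Incidence X) :
    potential p (ofInc i) = min (4 * X.dist p i.1.1 + 1) (4 * X.infDist p i.1.2 + 3) :=
  rfl

@[simp] theorem potential_ofEdge (e : X.edgeSet) :
    potential p (ofEdge e) = 4 * X.infDist p e + 2 :=
  rfl

theorem potential_le_of_adj {x y : CXVert X} (h : (CX X).Adj x y) :
    potential p y ≤ potential p x + 1 := by
  induction x using CXVert.cases <;> induction y using CXVert.cases <;>
    simp only [not_adj_ofVert_ofVert, not_adj_ofVert_ofEdge, not_adj_ofEdge_ofVert,
      not_adj_ofInc_ofInc, not_adj_ofEdge_ofEdge, adj_ofVert_ofInc, adj_ofInc_ofVert,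
      adj_ofInc_ofEdge, adj_ofEdge_ofInc] at h <;>
    subst h
  -- the four remaining cases are the two edges at an incidence vertex, in either direction
  all_goals
    rename_i i
    have := infDist_le_dist (G := X) (p := p) i.2
    have := dist_le_infDist_add_one (G := X) (p := p) i.1.2.2 i.2
    simp only [potential_ofVert, potential_ofInc, potential_ofEdge]
    omega

theorem exists_adj_potential_add_one_eq {x : CXVert X} (hx : potential p x ≠ 0) :
    ∃ y, (CX X).Adj x y ∧ potential p y + 1 = potential p x := by
  induction x using CXVert.cases with
  | vert v =>
    obtain ⟨w, hvw, hw⟩ := exists_adj_dist_add_one_eq (G := X) (u := p) (by simpa using hx)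
    refine ⟨ofInc ⟨(v, ⟨s(v, w), hvw⟩), Sym2.mem_mk_left v w⟩, by simp, ?_⟩
    simp only [potential_ofVert, potential_ofInc, infDist_mk]
    omega
  | inc i =>
    have := infDist_le_dist (G := X) (p := p) i.2
    have := dist_le_infDist_add_one (G := X) (p := p) i.1.2.2 i.2
    by_cases hi : X.dist p i.1.1 ≤ X.infDist p i.1.2
    · exact ⟨ofVert i.1.1, by simp, by simp only [potential_ofVert, potential_ofInc]; omega⟩
    · exact ⟨ofEdge i.1.2, by simp, by simp only [potential_ofEdge, potential_ofInc]; omega⟩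
  | edge e =>
    obtain ⟨a, ha, hda⟩ := exists_mem_dist_eq_infDist (G := X) p e
    refine ⟨ofInc ⟨(a, e), ha⟩, by simp, ?_⟩
    simp only [potential_ofEdge, potential_ofInc]
    omega

theorem potential_eq_zero_iff (hconn : X.Connected) {x : CXVert X} :
    potential p x = 0 ↔ x = ofVert p := by
  induction x using CXVert.cases <;> simp [hconn.dist_eq_zero_iff, eq_comm]

end potential

theorem dist_ofVert_eq_potential (hconn : X.Connected) (p : V) (x : CXVert X) :
    (CX X).dist (ofVert p) x = potential p x :=
  dist_eq_of_adj_le_of_exists_adj_eq _ (fun _ => potential_eq_zero_iff p hconn)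
    (fun _ _ => potential_le_of_adj p) (fun _ => exists_adj_potential_add_one_eq p) x

theorem range_ofVert_eq (hconn : X.Connected) (p : V) :
    Set.range ofVert = {x : CXVert X | (CX X).dist (ofVert p) x % 4 = 0} := by
  ext x
  induction x using CXVert.cases <;>
    simp [dist_ofVert_eq_potential hconn]
  omega

end CX

theorem CX_degrees_and_P_by_distance_general {V : Type} (X : SimpleGraph V)
    (hconn : X.Connected) :
    (∀ q, ((CX X).neighborSet (Sum.inr (Sum.inl q))).ncard = 2) ∧
    (∀ r, ((CX X).neighborSet (Sum.inr (Sum.inr r))).ncard = 2) ∧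
    (∀ p : V, (X.neighborSet p).ncard ≠ 2 →
      Set.range (Sum.inl : V → CXVert X) =
        {w : CXVert X | (CX X).dist (Sum.inl p) w % 4 = 0}) :=
  ⟨CX.ncard_neighborSet_ofInc, CX.ncard_neighborSet_ofEdge,
    fun p _ => CX.range_ofVert_eq hconn p⟩

/-- If `X` is connected and not a cycle, then in `C_X` all vertices of `Q` and
`R` have degree two, and `P` is exactly the set of vertices whose distance from
any fixed vertex `p ∈ P` of degree `≠ 2` is divisible by four. -/
theorem CX_degrees_and_P_by_distance {V : Type} [Fintype V] (X : SimpleGraph V)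
    (hconn : X.Connected)
    (hnotcycle : ∀ n : ℕ, IsEmpty (X ≃g SimpleGraph.cycleGraph n)) :
    (∀ q, ((CX X).neighborSet (Sum.inr (Sum.inl q))).ncard = 2) ∧
    (∀ r, ((CX X).neighborSet (Sum.inr (Sum.inr r))).ncard = 2) ∧
    (∀ p : V, (X.neighborSet p).ncard ≠ 2 →
      Set.range (Sum.inl : V → CXVert X) =
        {w : CXVert X | (CX X).dist (Sum.inl p) w % 4 = 0}) :=
  CX_degrees_and_P_by_distance_general X hconn
end
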